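/- There is a bijection between global types p(x) ∈ S₁(𝔠) invariant over B and coherent families of (not necessarily continuous) sections πₙ : Sₙ(B) → Sₙ₊₁(B) of the restriction maps; equivalently, sections in simplicial sets of the natural transformation pr : S_•(B) ∘ [+1] → S_•(B). -/

import Mathlib

/-!
STATEMENT 7: There is a bijection between global types `p(x) ∈ S₁(M)` invariant over
`B` and coherent families of (not necessarily continuous) sections
`πₙ : Sₙ(B) → Sₙ₊₁(B)` of the restriction maps (equivalently, sections in simplicial
sets of the décalage projection `S_•(B) ∘ [+1] → S_•(B)`).  The bijection sends `p` to
the family `r ↦ p ⊗ r`, which is characterized by: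
`φ(x, ȳ) ∈ πₙ(tp(c̄/B)) ↔ φ(x, c̄) ∈ p` (the predicate `Corresponds`).
The monster-model hypothesis (every restriction `p ↾ B c̄` of an invariant global type
is realized) is `hreal`.
-/

open FirstOrder FirstOrder.Language
open FirstOrder FirstOrder.Language

namespace StoneSpace

variable (L : Language) (M : Type*) [L.Structure M]

/-- Two `n`-tuples of a structure have the same complete type over a parameter set `B`
iff they satisfy the same formulas with parameters in `B`. -/
def typEq (B : Set M) (n : ℕ) (a b : Fin n → M) : Prop :=
  ∀ φ : L.Formula (Fin n ⊕ ↥B),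
    φ.Realize (Sum.elim a Subtype.val) ↔ φ.Realize (Sum.elim b Subtype.val)

def typSetoid (B : Set M) (n : ℕ) : Setoid (Fin n → M) :=
  ⟨typEq L M B n,
    ⟨fun _ _ => Iff.rfl, fun h φ => (h φ).symm, fun h h' φ => (h φ).trans (h' φ)⟩⟩

/-- The Stone space of complete `n`-types over `B` (identified, in a monster model,
with the set of types of `n`-tuples of the model). -/
def S (B : Set M) (n : ℕ) : Type _ := Quotient (typSetoid L M B n)

/-- The complete type of the tuple `a` over `B`. -/
def tp (B : Set M) {n : ℕ} (a : Fin n → M) : S L M B n :=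
  Quotient.mk (typSetoid L M B n) a

/-- The basic (cl)open subset of the type space determined by the formula `φ`;
membership in it expresses `φ ∈ p`. -/
def fmlSet (B : Set M) {n : ℕ} (φ : L.Formula (Fin n ⊕ ↥B)) : Set (S L M B n) :=
  fun p => Quotient.lift (fun a => φ.Realize (Sum.elim a Subtype.val))
    (fun a b (h : typEq L M B n a b) => propext (h φ)) p

/-- The Stone topology on the space of `n`-types over `B`, generated by the sets `fmlSet φ`. -/
instance (B : Set M) (n : ℕ) : TopologicalSpace (S L M B n) :=
  TopologicalSpace.generateFrom (Set.range (fmlSet L M B (n := n)))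

/-- The substitution (coordinate-permutation/projection) map between type spaces
induced by a map `s` of index sets. -/
def subst (B : Set M) {m n : ℕ} (s : Fin m → Fin n) : S L M B n → S L M B m :=
  Quotient.map (fun a => a ∘ s)
    (by
      intro a b h ψ
      have := h (ψ.relabel (Sum.map s id))
      rwa [Formula.realize_relabel, Formula.realize_relabel,
        Sum.elim_comp_map, Sum.elim_comp_map, Function.comp_id] at this)

variable {L M}

/-- Formulas over `B` in `n + 1` free variables, with the tuple `c` of elements
substituted for the last `n` variables: the result is a formula over `M` in one free
variable, i.e., a candidate member of a global `1`-type. -/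
def plug1 (B : Set M) {n : ℕ} (ψ : L.Formula (Fin (n + 1) ⊕ ↥B)) (c : Fin n → M) :
    L.Formula (Fin 1 ⊕ M) :=
  ψ.relabel
    (Sum.elim (Fin.cases (Sum.inl 0) (fun j => Sum.inr (c j))) (fun b => Sum.inr b.val))

/-- Same for formulas in `n + 2` free variables: the first two variables remain free. -/
def plug2 (B : Set M) {n : ℕ} (ψ : L.Formula (Fin (n + 2) ⊕ ↥B)) (c : Fin n → M) :
    L.Formula (Fin 2 ⊕ M) :=
  ψ.relabel
    (Sum.elim
      (Fin.cases (Sum.inl 0) (Fin.cases (Sum.inl 1) (fun j => Sum.inr (c j))))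
      (fun b => Sum.inr b.val))

/-- A complete global `k`-type over the model `M` (of the complete theory `Th(M)`): a
finitely satisfiable and complete set of formulas in `k` free variables with parameters
everywhere in `M`. -/
def IsGlobalType (k : ℕ) (p : Set (L.Formula (Fin k ⊕ M))) : Prop :=
  (∀ fs : Finset (L.Formula (Fin k ⊕ M)), ↑fs ⊆ p →
      ∃ c : Fin k → M, ∀ φ ∈ fs, φ.Realize (Sum.elim c id)) ∧
    (∀ φ : L.Formula (Fin k ⊕ M), φ ∈ p ↔ φ.not ∉ p)

/-- A global `1`-type is invariant over `B` if membership of `φ(x, cc)` depends only on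
the type of the parameter tuple `cc` over `B`. -/
def Invariant1 (B : Set M) (p : Set (L.Formula (Fin 1 ⊕ M))) : Prop :=
  ∀ (n : ℕ) (ψ : L.Formula (Fin (n + 1) ⊕ ↥B)) (c c' : Fin n → M),
    typEq L M B n c c' → (plug1 B ψ c ∈ p ↔ plug1 B ψ c' ∈ p)

/-- `c` realizes the restriction of the global type `p` to `B ∪ (range cc)`. -/
def RealizesRes (B : Set M) (p : Set (L.Formula (Fin 1 ⊕ M))) {n : ℕ}
    (cc : Fin n → M) (c : M) : Prop :=
  ∀ ψ : L.Formula (Fin (n + 1) ⊕ ↥B),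
    plug1 B ψ cc ∈ p → ψ.Realize (Sum.elim (Fin.cons c cc) Subtype.val)

/-- The shift `s[+1]` of an index map, fixing the new first variable. -/
def shift {m n : ℕ} (s : Fin m → Fin n) : Fin (m + 1) → Fin (n + 1) :=
  Fin.cases 0 (fun i => (s i).succ)

variable (L M) in
/-- A family of maps `πₙ : Sₙ(B) → Sₙ₊₁(B)` is coherent if it commutes with all
substitution maps. -/
def Coherent (B : Set M) (π : ∀ n, S L M B n → S L M B (n + 1)) : Prop :=
  ∀ (m n : ℕ) (s : Fin m → Fin n) (r : S L M B n),
    π m (subst L M B s r) = subst L M B (shift s) (π n r)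

variable (L M) in
/-- A family of sections of the projections `Sₙ₊₁(B) → Sₙ(B)` forgetting the first
variable. -/
def IsSectionFamily (B : Set M) (π : ∀ n, S L M B n → S L M B (n + 1)) : Prop :=
  ∀ (n : ℕ) (r : S L M B n), subst L M B Fin.succ (π n r) = r

variable (L M) in
/-- The family `π` corresponds to the global type `p`:
`φ(x, ȳ) ∈ πₙ(tp(cc/B))` iff `φ(x, cc) ∈ p`. -/
def Corresponds (B : Set M) (p : Set (L.Formula (Fin 1 ⊕ M)))
    (π : ∀ n, S L M B n → S L M B (n + 1)) : Prop :=
  ∀ (n : ℕ) (cc : Fin n → M) (ψ : L.Formula (Fin (n + 1) ⊕ ↥B)),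
    π n (tp L M B cc) ∈ fmlSet L M B ψ ↔ plug1 B ψ cc ∈ p

end StoneSpace

/-!
An invariant global type `p` gives the sections `πₙ(tp(c̄/B)) = tp(a c̄/B)` for `a ⊨ p ↾ Bc̄`;
invariance makes them well defined, and since `φ(x, ȳ) ∈ πₙ(tp(c̄/B)) ↔ φ(x, c̄) ∈ p`, they are
coherent. Conversely, every global formula has the form `ψ(x, c̄)` with `ψ` over `B`, and a
coherent family of sections `π` defines `p` by `ψ(x, c̄) ∈ p ↔ ψ ∈ πₙ(tp(c̄/B))`. The point is
that this does not depend on the presentation `ψ(x, c̄)`: coherence moves two presentations to a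
common tuple `c̄c̄'`, and `π(tp(c̄c̄'/B))` extends `tp(c̄c̄'/B)`, so it cannot separate two formulas
that are equivalent over `c̄c̄'`. Both constructions are characterized by the same relation
between `p` and `π`, which determines each side from the other.
-/

namespace StoneSpace

variable {L : Language} {M : Type*} {B : Set M}

theorem plug1_not {n : ℕ} (ψ : L.Formula (Fin (n + 1) ⊕ ↥B)) (cc : Fin n → M) :
    plug1 B ψ.not cc = (plug1 B ψ cc).not :=
  BoundedFormula.relabel_not _ _

variable [L.Structure M]

theorem tp_surjective (n : ℕ) : Function.Surjective (tp L M B (n := n)) :=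
  Quotient.exists_rep

theorem tp_eq_tp_iff {n : ℕ} {a b : Fin n → M} :
    tp L M B a = tp L M B b ↔ typEq L M B n a b :=
  ⟨Quotient.exact, fun h => Quotient.sound h⟩

theorem mem_fmlSet_tp {n : ℕ} (ψ : L.Formula (Fin n ⊕ ↥B)) (a : Fin n → M) :
    tp L M B a ∈ fmlSet L M B ψ ↔ ψ.Realize (Sum.elim a Subtype.val) :=
  Iff.rfl

theorem subst_tp {m n : ℕ} (s : Fin m → Fin n) (a : Fin n → M) :
    subst L M B s (tp L M B a) = tp L M B (a ∘ s) :=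
  rfl

theorem S_ext {n : ℕ} {q q' : S L M B n}
    (h : ∀ ψ : L.Formula (Fin n ⊕ ↥B), q ∈ fmlSet L M B ψ ↔ q' ∈ fmlSet L M B ψ) :
    q = q' := by
  obtain ⟨a, rfl⟩ := tp_surjective n q
  obtain ⟨b, rfl⟩ := tp_surjective n q'
  exact tp_eq_tp_iff.2 h

theorem subst_mem_fmlSet {m n : ℕ} (s : Fin m → Fin n) (q : S L M B n)
    (ψ : L.Formula (Fin m ⊕ ↥B)) :
    subst L M B s q ∈ fmlSet L M B ψ ↔ q ∈ fmlSet L M B (ψ.relabel (Sum.map s id)) := by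
  obtain ⟨a, rfl⟩ := tp_surjective n q
  rw [subst_tp, mem_fmlSet_tp, mem_fmlSet_tp, Formula.realize_relabel, Sum.elim_comp_map,
    Function.comp_id]

theorem mem_fmlSet_top {n : ℕ} (q : S L M B n) : q ∈ fmlSet L M B ⊤ := by
  obtain ⟨a, rfl⟩ := tp_surjective n q
  exact Formula.realize_top.2 trivial

theorem mem_fmlSet_not {n : ℕ} (q : S L M B n) (ψ : L.Formula (Fin n ⊕ ↥B)) :
    q ∈ fmlSet L M B ψ.not ↔ q ∉ fmlSet L M B ψ := by
  obtain ⟨a, rfl⟩ := tp_surjective n q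
  exact Formula.realize_not

theorem mem_fmlSet_inf {n : ℕ} (q : S L M B n) (ψ θ : L.Formula (Fin n ⊕ ↥B)) :
    q ∈ fmlSet L M B (ψ ⊓ θ) ↔ q ∈ fmlSet L M B ψ ∧ q ∈ fmlSet L M B θ := by
  obtain ⟨a, rfl⟩ := tp_surjective n q
  exact Formula.realize_inf

theorem mem_fmlSet_iff {n : ℕ} (q : S L M B n) (ψ θ : L.Formula (Fin n ⊕ ↥B)) :
    q ∈ fmlSet L M B (ψ.iff θ) ↔ (q ∈ fmlSet L M B ψ ↔ q ∈ fmlSet L M B θ) := by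
  obtain ⟨a, rfl⟩ := tp_surjective n q
  exact Formula.realize_iff

theorem append_comp_castAdd {n n' : ℕ} (cc : Fin n → M) (cc' : Fin n' → M) :
    Fin.append cc cc' ∘ Fin.castAdd n' = cc :=
  funext (Fin.append_left cc cc')

theorem append_comp_natAdd {n n' : ℕ} (cc : Fin n → M) (cc' : Fin n' → M) :
    Fin.append cc cc' ∘ Fin.natAdd n = cc' :=
  funext (Fin.append_right cc cc')

theorem cons_comp_shift {m n : ℕ} (x : M) (cc : Fin n → M) (s : Fin m → Fin n) :
    Fin.cons x cc ∘ shift s = Fin.cons x (cc ∘ s) := by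
  funext i
  refine Fin.cases ?_ (fun j => ?_) i <;> simp [shift]

theorem realize_plug1 {n : ℕ} (ψ : L.Formula (Fin (n + 1) ⊕ ↥B)) (cc : Fin n → M)
    (v : Fin 1 ⊕ M → M) :
    (plug1 B ψ cc).Realize v ↔
      ψ.Realize (Sum.elim (Fin.cons (v (Sum.inl 0)) fun j => v (Sum.inr (cc j)))
        fun b => v (Sum.inr b.val)) := by
  rw [plug1, Formula.realize_relabel]
  apply iff_of_eq
  congr 1
  funext z
  rcases z with i | b
  · refine Fin.cases ?_ (fun j => ?_) i <;> simp
  · rfl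

theorem realize_plug1_elim {n : ℕ} (ψ : L.Formula (Fin (n + 1) ⊕ ↥B)) (cc : Fin n → M)
    (x : M) :
    (plug1 B ψ cc).Realize (Sum.elim (fun _ => x) id) ↔
      ψ.Realize (Sum.elim (Fin.cons x cc) Subtype.val) :=
  realize_plug1 ψ cc _

theorem realize_plug1_inf {n : ℕ} (ψ θ : L.Formula (Fin (n + 1) ⊕ ↥B)) (cc : Fin n → M)
    (v : Fin 1 ⊕ M → M) :
    (plug1 B (ψ ⊓ θ) cc).Realize v ↔ (plug1 B ψ cc).Realize v ∧ (plug1 B θ cc).Realize v := by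
  rw [realize_plug1, realize_plug1, realize_plug1, Formula.realize_inf]

theorem realize_plug1_relabel_shift {m n : ℕ} (ψ : L.Formula (Fin (m + 1) ⊕ ↥B))
    (s : Fin m → Fin n) (cc : Fin n → M) (v : Fin 1 ⊕ M → M) :
    (plug1 B (ψ.relabel (Sum.map (shift s) id)) cc).Realize v ↔
      (plug1 B ψ (cc ∘ s)).Realize v := by
  rw [realize_plug1, realize_plug1, Formula.realize_relabel, Sum.elim_comp_map,
    Function.comp_id, cons_comp_shift]
  rfl

/-- The parameters from `M` become the variables `1, …, n`; no parameter from `B` is used. -/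
theorem exists_plug1_repr (B : Set M) (φ : L.Formula (Fin 1 ⊕ M)) :
    ∃ (n : ℕ) (cc : Fin n → M) (ψ : L.Formula (Fin (n + 1) ⊕ ↥B)),
      ∀ v : Fin 1 ⊕ M → M, φ.Realize v ↔ (plug1 B ψ cc).Realize v := by
  classical
  let fv := φ.freeVarFinset
  let t : Finset M := fv.preimage Sum.inr Sum.inr_injective.injOn
  let e := t.equivFin
  let g : ↥(↑fv : Set (Fin 1 ⊕ M)) → Fin (t.card + 1) ⊕ ↥B := fun
    | ⟨Sum.inl _, _⟩ => Sum.inl 0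
    | ⟨Sum.inr m, hm⟩ => Sum.inl (e ⟨m, Finset.mem_preimage.2 hm⟩).succ
  refine ⟨t.card, fun j => e.symm j,
    Formula.relabel g (φ.restrictFreeVar (Set.inclusion subset_rfl)), fun v => ?_⟩
  rw [realize_plug1, Formula.realize_relabel]
  refine (BoundedFormula.realize_restrictFreeVar' (subset_refl _)).symm.trans (iff_of_eq ?_)
  congr 1
  funext ⟨z, hz⟩
  rcases z with i | m
  · simp [g, Subsingleton.elim i 0]
  · simp [g]

noncomputable def exFml {n : ℕ} (ψ : L.Formula (Fin (n + 1) ⊕ ↥B)) : L.Formula (Fin n ⊕ ↥B) :=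
  (ψ.relabel (Sum.elim (Fin.cases (Sum.inr ()) fun j => Sum.inl (Sum.inl j))
    fun b => Sum.inl (Sum.inr b))).iExs Unit

theorem realize_exFml {n : ℕ} (ψ : L.Formula (Fin (n + 1) ⊕ ↥B)) (cc : Fin n → M) :
    (exFml ψ).Realize (Sum.elim cc Subtype.val) ↔
      ∃ x : M, ψ.Realize (Sum.elim (Fin.cons x cc) Subtype.val) := by
  rw [exFml, Formula.realize_iExs, (Equiv.funUnique Unit M).exists_congr_left]
  refine exists_congr fun x => ?_
  rw [Formula.realize_relabel]
  apply iff_of_eq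
  congr 1
  funext z
  rcases z with j | b
  · refine Fin.cases ?_ (fun j => ?_) j <;> simp
  · rfl

namespace IsGlobalType

variable {k : ℕ} {p : Set (L.Formula (Fin k ⊕ M))}

theorem of_inf_mem (htop : ⊤ ∈ p) (hinf : ∀ φ ∈ p, ∀ ψ ∈ p, φ ⊓ ψ ∈ p)
    (hsat : ∀ φ ∈ p, ∃ c : Fin k → M, φ.Realize (Sum.elim c id))
    (hcompl : ∀ φ, φ ∈ p ↔ φ.not ∉ p) : IsGlobalType k p := by
  classical
  suffices h : ∀ fs : Finset (L.Formula (Fin k ⊕ M)), ↑fs ⊆ p → ∃ Φ ∈ p,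
      ∀ c : Fin k → M, Φ.Realize (Sum.elim c id) → ∀ φ ∈ fs, φ.Realize (Sum.elim c id) by
    refine ⟨fun fs hfs => ?_, hcompl⟩
    obtain ⟨Φ, hΦ, himp⟩ := h fs hfs
    obtain ⟨c, hc⟩ := hsat Φ hΦ
    exact ⟨c, himp c hc⟩
  intro fs
  induction fs using Finset.induction_on with
  | empty => exact fun _ => ⟨⊤, htop, by simp⟩
  | insert φ fs _ ih =>
    intro hfs
    rw [Finset.coe_insert, Set.insert_subset_iff] at hfs
    obtain ⟨Φ, hΦ, himp⟩ := ih hfs.2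
    refine ⟨φ ⊓ Φ, hinf φ hfs.1 Φ hΦ, fun c hc ψ hψ => ?_⟩
    rw [Formula.realize_inf] at hc
    rcases Finset.mem_insert.1 hψ with rfl | hψ
    · exact hc.1
    · exact himp c hc.2 ψ hψ

theorem mem_not_iff (hp : IsGlobalType k p) (φ : L.Formula (Fin k ⊕ M)) : φ.not ∈ p ↔ φ ∉ p := by
  rw [hp.2 φ, not_not]

theorem mem_iff_of_realize_iff (hp : IsGlobalType k p) {φ φ' : L.Formula (Fin k ⊕ M)}
    (h : ∀ v : Fin k ⊕ M → M, φ.Realize v ↔ φ'.Realize v) : φ ∈ p ↔ φ' ∈ p := by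
  classical
  suffices key : ∀ χ χ' : L.Formula (Fin k ⊕ M),
      (∀ v : Fin k ⊕ M → M, χ.Realize v ↔ χ'.Realize v) →
      χ ∈ p → χ' ∈ p from ⟨key φ φ' h, key φ' φ fun v => (h v).symm⟩
  intro χ χ' hχχ' hχ
  by_contra hχ'
  have hnot : χ'.not ∈ p := (hp.mem_not_iff χ').2 hχ'
  obtain ⟨c, hc⟩ := hp.1 {χ, χ'.not} (by simp [Set.insert_subset_iff, hχ, hnot])
  have hc' := hc χ'.not (by simp)
  exact (Formula.realize_not.1 hc') ((hχχ' _).1 (hc χ (by simp)))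

end IsGlobalType

theorem RealizesRes.realize_iff_mem {p : Set (L.Formula (Fin 1 ⊕ M))} (hp : IsGlobalType 1 p)
    {n : ℕ} {cc : Fin n → M} {c : M} (hc : RealizesRes B p cc c)
    (ψ : L.Formula (Fin (n + 1) ⊕ ↥B)) :
    ψ.Realize (Sum.elim (Fin.cons c cc) Subtype.val) ↔ plug1 B ψ cc ∈ p := by
  refine ⟨fun h => ?_, hc ψ⟩
  by_contra hψ
  have hnot : plug1 B ψ.not cc ∈ p := by rw [plug1_not]; exact (hp.mem_not_iff _).2 hψ
  exact (Formula.realize_not.1 (hc _ hnot)) h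

namespace Corresponds

variable {p p' : Set (L.Formula (Fin 1 ⊕ M))} {π π' : ∀ n, S L M B n → S L M B (n + 1)}

theorem invariant (h : Corresponds L M B p π) : Invariant1 B p := fun n ψ c c' hcc => by
  rw [← h, ← h, tp_eq_tp_iff.2 hcc]

theorem coherent (hp : IsGlobalType 1 p) (h : Corresponds L M B p π) : Coherent L M B π := by
  intro m n s r
  obtain ⟨cc, rfl⟩ := tp_surjective n r
  refine S_ext fun ψ => ?_
  rw [subst_tp, h, subst_mem_fmlSet, h]
  exact hp.mem_iff_of_realize_iff fun v => (realize_plug1_relabel_shift ψ s cc v).symm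

theorem unique_sections (h : Corresponds L M B p π) (h' : Corresponds L M B p π') : π = π' := by
  funext n r
  obtain ⟨cc, rfl⟩ := tp_surjective n r
  exact S_ext fun ψ => by rw [h, h']

theorem unique_type (hp : IsGlobalType 1 p) (hp' : IsGlobalType 1 p')
    (h : Corresponds L M B p π) (h' : Corresponds L M B p' π) : p = p' := by
  ext φ
  obtain ⟨n, cc, ψ, hψ⟩ := exists_plug1_repr B φ
  rw [hp.mem_iff_of_realize_iff hψ, hp'.mem_iff_of_realize_iff hψ, ← h, ← h']

end Corresponds

section SectionsOfType

variable {p : Set (L.Formula (Fin 1 ⊕ M))} (hp : IsGlobalType 1 p) (hinv : Invariant1 B p)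
  (hr : ∀ (n : ℕ) (cc : Fin n → M), ∃ c : M, RealizesRes B p cc c)

noncomputable def sectionsOfType : ∀ n, S L M B n → S L M B (n + 1) := fun n =>
  Quotient.map (fun cc => Fin.cons (hr n cc).choose cc) fun cc cc' hcc ψ => by
    rw [(hr n cc).choose_spec.realize_iff_mem hp, (hr n cc').choose_spec.realize_iff_mem hp]
    exact hinv n ψ cc cc' hcc

theorem sectionsOfType_tp {n : ℕ} (cc : Fin n → M) :
    sectionsOfType hp hinv hr n (tp L M B cc) = tp L M B (Fin.cons (hr n cc).choose cc) :=
  rfl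

theorem corresponds_sectionsOfType : Corresponds L M B p (sectionsOfType hp hinv hr) :=
  fun n cc ψ => by
    rw [sectionsOfType_tp, mem_fmlSet_tp, (hr n cc).choose_spec.realize_iff_mem hp]

theorem isSectionFamily_sectionsOfType : IsSectionFamily L M B (sectionsOfType hp hinv hr) := by
  intro n r
  obtain ⟨cc, rfl⟩ := tp_surjective n r
  rw [sectionsOfType_tp, subst_tp, Fin.cons_comp_succ]

end SectionsOfType

theorem exists_realize_cons_of_subst_succ {n : ℕ} {q : S L M B (n + 1)} {cc : Fin n → M}
    (hq : subst L M B Fin.succ q = tp L M B cc) {ψ : L.Formula (Fin (n + 1) ⊕ ↥B)}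
    (hψ : q ∈ fmlSet L M B ψ) : ∃ x, ψ.Realize (Sum.elim (Fin.cons x cc) Subtype.val) := by
  obtain ⟨a, rfl⟩ := tp_surjective (n + 1) q
  rw [subst_tp, tp_eq_tp_iff] at hq
  rw [← realize_exFml, ← hq, realize_exFml]
  exact ⟨a 0, (Fin.cons_self_tail a).symm ▸ hψ⟩

theorem mem_fmlSet_iff_of_subst_succ {n : ℕ} {q : S L M B (n + 1)} {cc : Fin n → M}
    (hq : subst L M B Fin.succ q = tp L M B cc) {ψ θ : L.Formula (Fin (n + 1) ⊕ ↥B)}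
    (h : ∀ x, ψ.Realize (Sum.elim (Fin.cons x cc) Subtype.val) ↔
      θ.Realize (Sum.elim (Fin.cons x cc) Subtype.val)) :
    q ∈ fmlSet L M B ψ ↔ q ∈ fmlSet L M B θ := by
  rw [← mem_fmlSet_iff]
  by_contra hq'
  rw [← mem_fmlSet_not] at hq'
  obtain ⟨x, hx⟩ := exists_realize_cons_of_subst_succ hq hq'
  rw [Formula.realize_not, Formula.realize_iff] at hx
  exact hx (h x)

section TypeOfSections

variable {π : ∀ n, S L M B n → S L M B (n + 1)}

theorem Coherent.mem_fmlSet_comp (hcoh : Coherent L M B π) {m n : ℕ} (s : Fin m → Fin n)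
    (cc : Fin n → M) (ψ : L.Formula (Fin (m + 1) ⊕ ↥B)) :
    π m (tp L M B (cc ∘ s)) ∈ fmlSet L M B ψ ↔
      π n (tp L M B cc) ∈ fmlSet L M B (ψ.relabel (Sum.map (shift s) id)) := by
  rw [← subst_tp, hcoh, subst_mem_fmlSet]

theorem mem_fmlSet_congr_plug1 (hcoh : Coherent L M B π) (hsec : IsSectionFamily L M B π)
    {n n' : ℕ} {cc : Fin n → M} {cc' : Fin n' → M} {ψ : L.Formula (Fin (n + 1) ⊕ ↥B)}
    {ψ' : L.Formula (Fin (n' + 1) ⊕ ↥B)}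
    (h : ∀ v : Fin 1 ⊕ M → M, (plug1 B ψ cc).Realize v ↔ (plug1 B ψ' cc').Realize v) :
    π n (tp L M B cc) ∈ fmlSet L M B ψ ↔ π n' (tp L M B cc') ∈ fmlSet L M B ψ' := by
  have hleft := hcoh.mem_fmlSet_comp (Fin.castAdd n') (Fin.append cc cc') ψ
  have hright := hcoh.mem_fmlSet_comp (Fin.natAdd n) (Fin.append cc cc') ψ'
  rw [append_comp_castAdd] at hleft
  rw [append_comp_natAdd] at hright
  rw [hleft, hright]
  refine mem_fmlSet_iff_of_subst_succ (hsec _ _) fun x => ?_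
  rw [← realize_plug1_elim, ← realize_plug1_elim, realize_plug1_relabel_shift,
    realize_plug1_relabel_shift, append_comp_castAdd, append_comp_natAdd]
  exact h _

variable (π) in
def typeOfSections : Set (L.Formula (Fin 1 ⊕ M)) :=
  {φ | ∃ (n : ℕ) (cc : Fin n → M) (ψ : L.Formula (Fin (n + 1) ⊕ ↥B)),
    (∀ v : Fin 1 ⊕ M → M, φ.Realize v ↔ (plug1 B ψ cc).Realize v) ∧
      π n (tp L M B cc) ∈ fmlSet L M B ψ}

theorem mem_typeOfSections_iff (hcoh : Coherent L M B π) (hsec : IsSectionFamily L M B π)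
    {φ : L.Formula (Fin 1 ⊕ M)} {n : ℕ} {cc : Fin n → M} {ψ : L.Formula (Fin (n + 1) ⊕ ↥B)}
    (hφ : ∀ v : Fin 1 ⊕ M → M, φ.Realize v ↔ (plug1 B ψ cc).Realize v) :
    φ ∈ typeOfSections π ↔ π n (tp L M B cc) ∈ fmlSet L M B ψ :=
  ⟨fun ⟨_, _, _, hφ', hmem⟩ =>
      (mem_fmlSet_congr_plug1 hcoh hsec fun v => (hφ v).symm.trans (hφ' v)).2 hmem,
    fun hmem => ⟨n, cc, ψ, hφ, hmem⟩⟩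

theorem corresponds_typeOfSections (hcoh : Coherent L M B π) (hsec : IsSectionFamily L M B π) :
    Corresponds L M B (typeOfSections π) π :=
  fun _ _ _ => (mem_typeOfSections_iff hcoh hsec fun _ => Iff.rfl).symm

theorem isGlobalType_typeOfSections (hcoh : Coherent L M B π) (hsec : IsSectionFamily L M B π) :
    IsGlobalType 1 (typeOfSections π) := by
  refine IsGlobalType.of_inf_mem ?_ ?_ ?_ fun φ => ?_
  · refine (mem_typeOfSections_iff hcoh hsec (cc := Fin.elim0) (ψ := ⊤) fun v => ?_).2
      (mem_fmlSet_top _)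
    simp [realize_plug1]
  · rintro φ ⟨n, cc, ψ, hφ, hψ⟩ φ' ⟨n', cc', ψ', hφ', hψ'⟩
    refine ⟨n + n', Fin.append cc cc', ψ.relabel (Sum.map (shift (Fin.castAdd n')) id) ⊓
      ψ'.relabel (Sum.map (shift (Fin.natAdd n)) id), fun v => ?_, ?_⟩
    · rw [Formula.realize_inf, realize_plug1_inf, realize_plug1_relabel_shift,
        realize_plug1_relabel_shift, append_comp_castAdd, append_comp_natAdd]
      exact and_congr (hφ v) (hφ' v)
    · rw [mem_fmlSet_inf, ← hcoh.mem_fmlSet_comp, ← hcoh.mem_fmlSet_comp, append_comp_castAdd,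
        append_comp_natAdd]
      exact ⟨hψ, hψ'⟩
  · rintro φ ⟨n, cc, ψ, hφ, hψ⟩
    obtain ⟨x, hx⟩ := exists_realize_cons_of_subst_succ (hsec n _) hψ
    exact ⟨fun _ => x, (hφ _).2 ((realize_plug1_elim ψ cc x).2 hx)⟩
  · obtain ⟨n, cc, ψ, hψ⟩ := exists_plug1_repr B φ
    have hψnot : ∀ v : Fin 1 ⊕ M → M, φ.not.Realize v ↔ (plug1 B ψ.not cc).Realize v :=
      fun v => by rw [plug1_not, Formula.realize_not, Formula.realize_not, hψ]
    rw [mem_typeOfSections_iff hcoh hsec hψ, mem_typeOfSections_iff hcoh hsec hψnot,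
      mem_fmlSet_not, not_not]

end TypeOfSections

end StoneSpace

open StoneSpace in
theorem invariant_types_biject_with_coherent_section_families
    (L : Language) (M : Type*) [L.Structure M] (B : Set M)
    (hreal : ∀ (p : Set (L.Formula (Fin 1 ⊕ M))),
      IsGlobalType 1 p → Invariant1 B p →
        ∀ (n : ℕ) (cc : Fin n → M), ∃ c : M, RealizesRes B p cc c) :
    ∃ e : {p : Set (L.Formula (Fin 1 ⊕ M)) // IsGlobalType 1 p ∧ Invariant1 B p} ≃
        {π : ∀ n, S L M B n → S L M B (n + 1) //
          Coherent L M B π ∧ IsSectionFamily L M B π},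
      ∀ p, Corresponds L M B p.val (e p).val := by
  let toSections : {p // IsGlobalType 1 p ∧ Invariant1 B p} →
      {π // Coherent L M B π ∧ IsSectionFamily L M B π} := fun p =>
    ⟨sectionsOfType p.2.1 p.2.2 (hreal p.1 p.2.1 p.2.2),
      (corresponds_sectionsOfType _ _ _).coherent p.2.1, isSectionFamily_sectionsOfType _ _ _⟩
  let toType : {π // Coherent L M B π ∧ IsSectionFamily L M B π} →
      {p // IsGlobalType 1 p ∧ Invariant1 B p} := fun π =>
    ⟨typeOfSections π.1, isGlobalType_typeOfSections π.2.1 π.2.2,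
      (corresponds_typeOfSections π.2.1 π.2.2).invariant⟩
  have hto : ∀ p, Corresponds L M B p.1 (toSections p).1 := fun p =>
    corresponds_sectionsOfType p.2.1 p.2.2 _
  have hof : ∀ π, Corresponds L M B (toType π).1 π.1 := fun π =>
    corresponds_typeOfSections π.2.1 π.2.2
  refine ⟨⟨toSections, toType, fun p => ?_, fun π => ?_⟩, hto⟩
  · exact Subtype.ext ((hof _).unique_type (toType _).2.1 p.2.1 (hto p))
  · exact Subtype.ext ((hto _).unique_sections (hof π))
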